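/- For any star S and any tree T on n vertices, gm(S □ T) ≤ √(2n) + 1; that is, if the k × k grid is a minor of the Cartesian product S □ T, then k ≤ √(2n) + 1. -/

import Mathlib

/-!
Call the vertices `(none, t)` of `S □ T` root vertices; the remaining vertices form `m` leaf copies
of `T`, which are joined to each other only through root vertices. Fix a model of the `k × k` grid.
The branch sets of the four corners of a unit square contain at least two root vertices in total:
otherwise, after rotating the square, three of them avoid the root vertices and therefore lie in a
single leaf copy, and collapsing everything else onto the unique root vertex turns the square into
a `C₄`-minor of the tree `T`. Every branch set meets at most four of the `(k - 1)²` unit squares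
and there are `n` root vertices, so `2 (k - 1)² ≤ 4 n`.
-/

open SimpleGraph

/-- `G` is a minor of `H`: there is a model of `G` in `H`, i.e. a family of pairwise
disjoint branch sets, each inducing a connected subgraph of `H`, with an edge of `H`
between the branch sets of any two adjacent vertices of `G`. -/
def SimpleGraph.IsMinorOf {α : Type*} {β : Type*} (G : SimpleGraph α) (H : SimpleGraph β) :
    Prop :=
  ∃ B : α → Set β,
    (∀ x, (H.induce (B x)).Connected) ∧
    (Pairwise fun x y => Disjoint (B x) (B y)) ∧
    (∀ ⦃x y⦄, G.Adj x y → ∃ a ∈ B x, ∃ b ∈ B y, H.Adj a b)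

/-- The strong product of two simple graphs. -/
def strongProd {α β : Type*} (G : SimpleGraph α) (H : SimpleGraph β) :
    SimpleGraph (α × β) where
  Adj a b := (a.1 = b.1 ∧ H.Adj a.2 b.2) ∨ (a.2 = b.2 ∧ G.Adj a.1 b.1) ∨
             (G.Adj a.1 b.1 ∧ H.Adj a.2 b.2)
  symm := ⟨by
    rintro a b (⟨h1, h2⟩ | ⟨h1, h2⟩ | ⟨h1, h2⟩)
    · exact Or.inl ⟨h1.symm, h2.symm⟩
    · exact Or.inr (Or.inl ⟨h1.symm, h2.symm⟩)
    · exact Or.inr (Or.inr ⟨h1.symm, h2.symm⟩)⟩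
  loopless := ⟨by
    rintro a (⟨_, h⟩ | ⟨_, h⟩ | ⟨h, _⟩)
    · exact H.irrefl h
    · exact G.irrefl h
    · exact G.irrefl h⟩

/-- The lexicographic product of two simple graphs. -/
def lexProd {α β : Type*} (G : SimpleGraph α) (H : SimpleGraph β) :
    SimpleGraph (α × β) where
  Adj a b := G.Adj a.1 b.1 ∨ (a.1 = b.1 ∧ H.Adj a.2 b.2)
  symm := ⟨by
    rintro a b (h | ⟨h1, h2⟩)
    · exact Or.inl h.symm
    · exact Or.inr ⟨h1.symm, h2.symm⟩⟩
  loopless := ⟨by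
    rintro a (h | ⟨_, h⟩)
    · exact G.irrefl h
    · exact H.irrefl h⟩

/-- The `k × k` grid graph: vertices `{0,…,k-1}²`, two vertices adjacent iff they differ
by exactly one in exactly one coordinate. -/
def gridGraph (k : ℕ) : SimpleGraph (Fin k × Fin k) :=
  SimpleGraph.fromRel (fun a b =>
    (a.1 = b.1 ∧ a.2.val + 1 = b.2.val) ∨ (a.2 = b.2 ∧ a.1.val + 1 = b.1.val))

/-- The star with `n` leaves: the root `none` is adjacent to each leaf `some i`. -/
def starGraph (n : ℕ) : SimpleGraph (Option (Fin n)) :=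
  SimpleGraph.fromRel (fun a b => a = none ∧ b ≠ none)

/-- The subdivided star `S_{ℓ,p}`: a star with `ℓ` leaves, each edge subdivided `p-1`
times, i.e. a centre `none` with `ℓ` pendant paths `some (i, 0), …, some (i, p-1)`. -/
def subStar (ℓ p : ℕ) : SimpleGraph (Option (Fin ℓ × Fin p)) :=
  SimpleGraph.fromRel (fun a b =>
    (a = none ∧ ∃ (i : Fin ℓ) (j : Fin p), j.val = 0 ∧ b = some (i, j)) ∨
    (∃ (i : Fin ℓ) (j k : Fin p), a = some (i, j) ∧ b = some (i, k) ∧ j.val + 1 = k.val))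

/-- `G` admits a tree-decomposition of width at most `w`: there is a tree `T` (indexed by
`ℕ`) and bags such that every vertex and every edge of `G` lies in some bag, for every
vertex of `G` the set of nodes whose bag contains it induces a non-empty connected
subtree of `T`, and every bag has at most `w + 1` vertices. -/
def HasDecompWidth {V : Type*} (G : SimpleGraph V) (w : ℕ) : Prop :=
  ∃ (T : SimpleGraph ℕ) (bag : ℕ → Finset V),
    T.IsTree ∧
    (∀ v : V, ∃ i, v ∈ bag i) ∧
    (∀ u v : V, G.Adj u v → ∃ i, u ∈ bag i ∧ v ∈ bag i) ∧
    (∀ v : V, (T.induce {i | v ∈ bag i}).Connected) ∧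
    (∀ i, (bag i).card ≤ w + 1)

/-- The treewidth of a finite graph: the minimum width of a tree-decomposition. -/
noncomputable def treewidth {V : Type*} [Fintype V] (G : SimpleGraph V) : ℕ :=
  sInf { w | HasDecompWidth G w }

/-- `gm G`: the maximum `k` such that the `k × k` grid is a minor of `G`. -/
noncomputable def gridMinorNum {V : Type*} (G : SimpleGraph V) : ℕ :=
  sSup { k | (gridGraph k).IsMinorOf G }

/-- A walk in a tree rooted at `r` is vertical if it contains at most one vertex of
each depth (distance from the root). -/
def IsVertical {V : Type*} (T : SimpleGraph V) (r : V) {u w : V} (p : T.Walk u w) : Prop :=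
  ∀ x ∈ p.support, ∀ y ∈ p.support, T.dist r x = T.dist r y → x = y

/-- In the tree `T` rooted at `r`, `v` is an ancestor of `w`: `v` lies on the unique
path from `r` to `w` (in a tree this is equivalent to this distance identity). -/
def Ancestor {V : Type*} (T : SimpleGraph V) (r v w : V) : Prop :=
  T.dist r w = T.dist r v + T.dist v w

/-- Two vertices of a rooted tree are related if one is an ancestor of the other. -/
def Related {V : Type*} (T : SimpleGraph V) (r v w : V) : Prop :=
  Ancestor T r v w ∨ Ancestor T r w v

/-- The height of `v` in the tree `T` rooted at `r`: the maximum order (number of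
vertices) of a vertical path whose upper (minimum-depth) endpoint is `v`. -/
noncomputable def height {V : Type*} (T : SimpleGraph V) (r v : V) : ℕ :=
  sSup { n | ∃ (w : V) (p : T.Walk v w), p.IsPath ∧ IsVertical T r p ∧
      (∀ x ∈ p.support, T.dist r v ≤ T.dist r x) ∧ p.support.length = n }

/-- The radius of a finite graph: the least `e` such that some vertex is within
distance `e` of every vertex. -/
noncomputable def graphRadius {V : Type*} [Fintype V] (T : SimpleGraph V) : ℕ :=
  sInf { e | ∃ v, ∀ w, T.dist v w ≤ e }

namespace SimpleGraph

variable {α β γ : Type*}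

structure IsMinorModel (G : SimpleGraph α) (H : SimpleGraph β) (B : α → Set β) : Prop where
  connected : ∀ x, (H.induce (B x)).Connected
  pairwise_disjoint : Pairwise fun x y => Disjoint (B x) (B y)
  exists_adj : ∀ ⦃x y⦄, G.Adj x y → ∃ a ∈ B x, ∃ b ∈ B y, H.Adj a b

theorem isMinorOf_iff_exists_isMinorModel {G : SimpleGraph α} {H : SimpleGraph β} :
    G.IsMinorOf H ↔ ∃ B, IsMinorModel G H B :=
  ⟨fun ⟨B, h₁, h₂, h₃⟩ => ⟨B, h₁, h₂, h₃⟩, fun ⟨B, h⟩ => ⟨B, h.1, h.2, h.3⟩⟩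

theorem isMinorOf_of_isEmpty [IsEmpty α] (G : SimpleGraph α) (H : SimpleGraph β) :
    G.IsMinorOf H :=
  ⟨isEmptyElim, isEmptyElim, fun x => isEmptyElim x, fun x => isEmptyElim x⟩

section Connectivity

variable {G : SimpleGraph α} {s : Set α}

theorem Connected.induce_image (hs : (G.induce s).Connected) {H : SimpleGraph β} (f : α → β)
    (hf : ∀ u ∈ s, ∀ v ∈ s, G.Adj u v → f u = f v ∨ H.Adj (f u) (f v)) :
    (H.induce (f '' s)).Connected := by
  let g : s → f '' s := fun u => ⟨f u, Set.mem_image_of_mem f u.2⟩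
  have hg : ∀ u v : s, (G.induce s).Adj u v →
      Relation.ReflTransGen (H.induce (f '' s)).Adj (g u) (g v) := by
    intro u v huv
    rcases hf u u.2 v v.2 huv with h | h
    · rw [show g u = g v from Subtype.ext h]
    · exact .single h
  obtain ⟨u⟩ := hs.nonempty
  refine (connected_iff _).2 ⟨?_, ⟨g u⟩⟩
  rintro ⟨_, u, hu, rfl⟩ ⟨_, v, hv, rfl⟩
  rw [reachable_iff_reflTransGen]
  exact Relation.ReflTransGen.lift' g hg _ _
    ((reachable_iff_reflTransGen _ _).1 (hs.preconnected ⟨u, hu⟩ ⟨v, hv⟩))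

theorem Connected.eq_of_adj_imp_eq (hs : (G.induce s).Connected) (f : α → γ)
    (hf : ∀ u ∈ s, ∀ v ∈ s, G.Adj u v → f u = f v) {u v : α} (hu : u ∈ s) (hv : v ∈ s) :
    f u = f v := by
  have himage := hs.induce_image (H := ⊥) f fun u hu v hv huv => .inl (hf u hu v hv huv)
  rw [induce_bot] at himage
  have := himage.preconnected ⟨f u, Set.mem_image_of_mem f hu⟩ ⟨f v, Set.mem_image_of_mem f hv⟩
  exact congrArg Subtype.val (reachable_bot.1 this)

theorem Connected.exists_adj_mem_not_mem (hs : (G.induce s).Connected) {t : Set α} {a b : α}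
    (ha : a ∈ s) (hat : a ∈ t) (hb : b ∈ s) (hbt : b ∉ t) :
    ∃ u ∈ s, ∃ v ∈ s, u ∈ t ∧ v ∉ t ∧ G.Adj u v := by
  by_contra! h
  have := hs.eq_of_adj_imp_eq (· ∈ t) (fun u hu v hv huv => propext
    ⟨fun hut => by_contra (h u hu v hv hut · huv),
     fun hvt => by_contra fun hut => h v hv u hu hvt hut huv.symm⟩) ha hb
  exact hbt (this ▸ hat)

theorem Connected.reachable_of_adj_imp_adj (hs : (G.induce s).Connected) {G' : SimpleGraph α}
    (h : ∀ u ∈ s, ∀ v ∈ s, G.Adj u v → G'.Adj u v) {u v : α} (hu : u ∈ s) (hv : v ∈ s) :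
    G'.Reachable u v :=
  (hs.preconnected ⟨u, hu⟩ ⟨v, hv⟩).map ⟨Subtype.val, fun {x y} hxy => h x x.2 y y.2 hxy⟩

/-- Deleting the edge `ab` would leave `a` and `b` joined through `a'b'`, so `ab` is no bridge. -/
theorem IsAcyclic.eq_of_adj_of_disjoint (hG : G.IsAcyclic) {t : Set α}
    (hs : (G.induce s).Connected) (ht : (G.induce t).Connected) (hst : Disjoint s t)
    {a a' b b' : α} (ha : a ∈ s) (ha' : a' ∈ s) (hb : b ∈ t) (hb' : b' ∈ t)
    (hab : G.Adj a b) (hab' : G.Adj a' b') : a = a' ∧ b = b' := by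
  by_contra hne
  have hbridge := isBridge_iff.1 (isAcyclic_iff_forall_adj_isBridge.1 hG hab)
  have hb_s : b ∉ s := Set.disjoint_right.1 hst hb
  have ha_t : a ∉ t := Set.disjoint_left.1 hst ha
  have hs' : (G.deleteEdges {s(a, b)}).Reachable a a' :=
    hs.reachable_of_adj_imp_adj (fun u hu v hv huv => by
      simp only [deleteEdges_adj, Set.mem_singleton_iff, Sym2.eq_iff]; grind) ha ha'
  have ht' : (G.deleteEdges {s(a, b)}).Reachable b' b :=
    ht.reachable_of_adj_imp_adj (fun u hu v hv huv => by
      simp only [deleteEdges_adj, Set.mem_singleton_iff, Sym2.eq_iff]; grind) hb' hb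
  have hab'' : (G.deleteEdges {s(a, b)}).Adj a' b' := by
    simp only [deleteEdges_adj, Set.mem_singleton_iff, Sym2.eq_iff]
    refine ⟨hab', ?_⟩
    rintro (⟨rfl, rfl⟩ | ⟨rfl, rfl⟩)
    · exact hne ⟨rfl, rfl⟩
    · exact hb_s ha'
  exact hbridge (hs'.trans (hab''.reachable.trans ht'))

end Connectivity

theorem IsMinorModel.comp {G : SimpleGraph α} {H : SimpleGraph β} {B : α → Set β}
    (hB : IsMinorModel G H B) {G' : SimpleGraph γ} (φ : G' →g G) (hφ : Function.Injective φ) :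
    IsMinorModel G' H (B ∘ φ) :=
  ⟨fun _ => hB.connected _, fun _ _ hxy => hB.pairwise_disjoint (hφ.ne hxy),
    fun _ _ h => hB.exists_adj (φ.map_adj h)⟩

theorem IsMinorModel.image {G : SimpleGraph α} {H : SimpleGraph β} {B : α → Set β}
    (hB : IsMinorModel G H B) {K : SimpleGraph γ} (f : β → γ)
    (hf : ∀ x y, ∀ u ∈ B x, ∀ v ∈ B y, H.Adj u v → f u = f v ∨ K.Adj (f u) (f v))
    (hdisj : Pairwise fun x y => Disjoint (f '' B x) (f '' B y)) :
    IsMinorModel G K fun x => f '' B x where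
  connected x := (hB.connected x).induce_image f (hf x x)
  pairwise_disjoint := hdisj
  exists_adj x y h := by
    obtain ⟨a, ha, b, hb, hab⟩ := hB.exists_adj h
    refine ⟨f a, Set.mem_image_of_mem f ha, f b, Set.mem_image_of_mem f hb,
      (hf x y a ha b hb hab).resolve_left fun heq => ?_⟩
    exact Set.disjoint_left.1 (hdisj h.ne) (Set.mem_image_of_mem f ha)
      (heq ▸ Set.mem_image_of_mem f hb)

section CycleFour

variable {G : SimpleGraph α} {B : Fin 4 → Set α}

theorem IsMinorModel.connected_union_one_two_three (hB : IsMinorModel (cycleGraph 4) G B) :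
    (G.induce (B 1 ∪ B 2 ∪ B 3)).Connected := by
  obtain ⟨a₁, ha₁, b₂, hb₂, h₁₂⟩ := hB.exists_adj (x := 1) (y := 2) (by decide)
  obtain ⟨a₂, ha₂, b₃, hb₃, h₂₃⟩ := hB.exists_adj (x := 2) (y := 3) (by decide)
  exact connected_induce_union
    (connected_induce_union (hB.connected 1).preconnected (hB.connected 2).preconnected
      ha₁ hb₂ h₁₂).preconnected
    (hB.connected 3).preconnected (Or.inr ha₂) hb₃ h₂₃

/-- `B 0` and `B 1 ∪ B 2 ∪ B 3` are disjoint connected sets joined by two distinct edges. -/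
theorem IsAcyclic.not_cycleGraph_four_isMinorOf (hG : G.IsAcyclic) :
    ¬ (cycleGraph 4).IsMinorOf G := by
  rw [isMinorOf_iff_exists_isMinorModel]
  rintro ⟨B, hB⟩
  have hdisj : ∀ i j : Fin 4, i ≠ j → ∀ v ∈ B i, v ∉ B j := fun i j hij =>
    Set.disjoint_left.1 (hB.pairwise_disjoint hij)
  obtain ⟨a₀, ha₀, b₁, hb₁, h₀₁⟩ := hB.exists_adj (x := 0) (y := 1) (by decide)
  obtain ⟨a₃, ha₃, b₀, hb₀, h₃₀⟩ := hB.exists_adj (x := 3) (y := 0) (by decide)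
  have hsep : Disjoint (B 0) (B 1 ∪ B 2 ∪ B 3) := by
    rw [Set.disjoint_left]
    rintro v hv ((h | h) | h) <;> exact hdisj 0 _ (by decide) v hv h
  obtain ⟨-, h⟩ := hG.eq_of_adj_of_disjoint (hB.connected 0)
    hB.connected_union_one_two_three hsep ha₀ hb₀ (.inl (.inl hb₁)) (.inr ha₃) h₀₁ h₃₀.symm
  exact hdisj 1 3 (by decide) b₁ hb₁ (h ▸ ha₃)

end CycleFour

def cycleGraph.addRight (n : ℕ) (c : Fin (n + 2)) : cycleGraph (n + 2) →g cycleGraph (n + 2) where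
  toFun x := x + c
  map_rel' h := by simpa only [cycleGraph_adj, add_sub_add_right_eq_sub] using h

@[simp]
theorem cycleGraph.addRight_apply (n : ℕ) (c x : Fin (n + 2)) : cycleGraph.addRight n c x = x + c :=
  rfl

theorem cycleGraph.addRight_injective (n : ℕ) (c : Fin (n + 2)) :
    Function.Injective (cycleGraph.addRight n c) :=
  add_left_injective c

theorem boxProd_adj_of_fst_eq {α β : Type*} {G : SimpleGraph α} {H : SimpleGraph β}
    {u v : α × β} (h : (G □ H).Adj u v) (h₁ : u.1 = v.1) : H.Adj u.2 v.2 :=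
  ((boxProd_adj.1 h).resolve_left fun h' => G.irrefl (h₁ ▸ h'.1)).1

end SimpleGraph

theorem starGraph_eq_none_or_eq_none_of_adj {m : ℕ} {a b : Option (Fin m)}
    (h : (_root_.starGraph m).Adj a b) : a = none ∨ b = none := by
  simp only [_root_.starGraph, fromRel_adj] at h
  tauto

section StarBox

variable {β : Type*} {m : ℕ} {T : SimpleGraph β}

theorem starBox_eq_none_of_adj {i : Fin m} {u v : Option (Fin m) × β}
    (h : (_root_.starGraph m □ T).Adj u v) (hu : u.1 = some i) (hv : v.1 ≠ some i) :
    v = (none, u.2) := by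
  rcases boxProd_adj.1 h with ⟨hS, h₂⟩ | ⟨-, h₁⟩
  · rcases starGraph_eq_none_or_eq_none_of_adj hS with h₀ | h₀
    · simp [h₀] at hu
    · exact Prod.ext h₀ h₂.symm
  · exact absurd (hu ▸ h₁.symm) hv

def collapseToCopy (i : Fin m) (τ : β) (v : Option (Fin m) × β) : β :=
  if v.1 = some i then v.2 else τ

theorem collapseToCopy_eq_or_adj {i : Fin m} {τ : β} {u v : Option (Fin m) × β}
    (h : (_root_.starGraph m □ T).Adj u v) (hu : u.1 = none → u.2 = τ)
    (hv : v.1 = none → v.2 = τ) :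
    collapseToCopy i τ u = collapseToCopy i τ v ∨
      T.Adj (collapseToCopy i τ u) (collapseToCopy i τ v) := by
  unfold collapseToCopy
  by_cases hui : u.1 = some i <;> by_cases hvi : v.1 = some i <;>
    simp only [hui, hvi, if_true, if_false, true_or]
  · exact .inr (boxProd_adj_of_fst_eq h (hui.trans hvi.symm))
  · obtain rfl := starBox_eq_none_of_adj h hui hvi
    exact .inl (hv rfl)
  · obtain rfl := starBox_eq_none_of_adj h.symm hvi hui
    exact .inl (hu rfl).symm

theorem mem_of_connected_of_fst_eq_some {s : Set (Option (Fin m) × β)}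
    (hs : ((_root_.starGraph m □ T).induce s).Connected) {i : Fin m} {τ : β}
    (hroot : ∀ v ∈ s, v.1 = none → v.2 = τ) {a b : Option (Fin m) × β} (ha : a ∈ s)
    (hai : a.1 = some i) (hb : b ∈ s) (hbi : b.1 ≠ some i) : (some i, τ) ∈ s := by
  obtain ⟨u, hu, v, hv, hui, hvi, huv⟩ :=
    hs.exists_adj_mem_not_mem (t := {v | v.1 = some i}) ha hai hb hbi
  have hv' := starBox_eq_none_of_adj huv hui hvi
  have hτ : u.2 = τ := by simpa [hv'] using hroot v hv (by rw [hv'])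
  rwa [← hτ, ← hui]

theorem SimpleGraph.IsMinorModel.exists_forall_fst_eq_some {B : Fin 4 → Set (Option (Fin m) × β)}
    (hB : IsMinorModel (cycleGraph 4) (_root_.starGraph m □ T) B)
    (hleaf : ∀ j ≠ 0, ∀ v ∈ B j, v.1 ≠ none) : ∃ i, ∀ j ≠ 0, ∀ v ∈ B j, v.1 = some i := by
  have hU : ∀ j ≠ 0, B j ⊆ B 1 ∪ B 2 ∪ B 3 := by
    intro j hj v hv
    fin_cases j <;> simp_all
  have hleafU : ∀ x ∈ B 1 ∪ B 2 ∪ B 3, x.1 ≠ none := by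
    rintro x ((hx | hx) | hx) <;> exact hleaf _ (by decide) x hx
  obtain ⟨⟨v₁, hv₁⟩⟩ := (hB.connected 1).nonempty
  obtain ⟨i, hi₁⟩ := Option.ne_none_iff_exists'.1 (hleaf 1 (by decide) v₁ hv₁)
  refine ⟨i, fun j hj v hv => hi₁ ▸ ?_⟩
  refine hB.connected_union_one_two_three.eq_of_adj_imp_eq Prod.fst
    (fun u hu w hw huw => ?_) (hU j hj hv) (hU 1 (by decide) hv₁)
  obtain ⟨k, hk⟩ := Option.ne_none_iff_exists'.1 (hleafU u hu)
  by_contra hne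
  exact hleafU w hw (by rw [starBox_eq_none_of_adj huw hk fun hw => hne (hk.trans hw.symm)])

theorem SimpleGraph.IsMinorModel.some_mem_zero_of_fst_ne_some {B : Fin 4 → Set (Option (Fin m) × β)}
    (hB : IsMinorModel (cycleGraph 4) (_root_.starGraph m □ T) B) {i : Fin m} {τ : β}
    (hroot : ∀ j, ∀ v ∈ B j, v.1 = none → v.2 = τ) (hcopy : ∀ j ≠ 0, ∀ v ∈ B j, v.1 = some i)
    {v : Option (Fin m) × β} (hv : v ∈ B 0) (hvi : v.1 ≠ some i) : (some i, τ) ∈ B 0 := by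
  by_cases hmeet : ∃ a ∈ B 0, a.1 = some i
  · obtain ⟨a, ha, hai⟩ := hmeet
    exact mem_of_connected_of_fst_eq_some (hB.connected 0) (hroot 0) ha hai hv hvi
  -- Otherwise `B 0` reaches `B 1` and `B 3` only through `(none, τ)`.
  push Not at hmeet
  have hnbr : ∀ j, (cycleGraph 4).Adj 0 j → j ≠ 0 → (some i, τ) ∈ B j := by
    intro j h0j hj
    obtain ⟨a, ha, b, hb, hab⟩ := hB.exists_adj h0j
    have ha' := starBox_eq_none_of_adj hab.symm (hcopy j hj b hb) (hmeet a ha)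
    have hτb : b.2 = τ := by simpa [ha'] using hroot 0 a ha (by rw [ha'])
    rwa [← hτb, ← hcopy j hj b hb]
  exact absurd (hnbr 3 (by decide) (by decide))
    (Set.disjoint_left.1 (hB.pairwise_disjoint (show (1 : Fin 4) ≠ 3 by decide))
      (hnbr 1 (by decide) (by decide)))

/-- Collapsing onto the leaf copy containing `B 1 ∪ B 2 ∪ B 3` turns `B` into a square model
in `T`. -/
theorem not_isMinorModel_cycleGraph_four_of_root_mem_zero (hT : T.IsAcyclic)
    {B : Fin 4 → Set (Option (Fin m) × β)}
    (hB : IsMinorModel (cycleGraph 4) (_root_.starGraph m □ T) B) {τ : β}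
    (hτ : ∀ j t, (none, t) ∈ B j → j = 0 ∧ t = τ) : False := by
  have hroot : ∀ j, ∀ v ∈ B j, v.1 = none → v.2 = τ := fun j v hv h₀ =>
    (hτ j v.2 (by rwa [← h₀])).2
  obtain ⟨i, hcopy⟩ := hB.exists_forall_fst_eq_some fun j hj v hv h₀ =>
    hj (hτ j v.2 (by rwa [← h₀])).1
  set f := collapseToCopy i τ
  have hlift : ∀ j, ∀ v ∈ B j, (some i, f v) ∈ B j := by
    intro j v hv
    by_cases hvi : v.1 = some i
    · simp only [f, collapseToCopy, hvi, if_true]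
      rwa [← (Prod.ext hvi rfl : v = (some i, v.2))]
    obtain rfl : j = 0 := by_contra fun hj => hvi (hcopy j hj v hv)
    simp only [f, collapseToCopy, hvi, if_false]
    exact hB.some_mem_zero_of_fst_ne_some hroot hcopy hv hvi
  refine hT.not_cycleGraph_four_isMinorOf (isMinorOf_iff_exists_isMinorModel.2
    ⟨_, hB.image f (fun x y u hu v hv huv => collapseToCopy_eq_or_adj huv (hroot x u hu)
      (hroot y v hv)) fun x y hxy => ?_⟩)
  refine Set.disjoint_left.2 ?_
  rintro _ ⟨u, hu, rfl⟩ ⟨v, hv, hvu⟩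
  exact Set.disjoint_left.1 (hB.pairwise_disjoint hxy) (hlift x u hu) (hvu ▸ hlift y v hv)

theorem not_isMinorModel_cycleGraph_four_of_root_subsingleton (hT : T.IsAcyclic)
    {B : Fin 4 → Set (Option (Fin m) × β)}
    (hB : IsMinorModel (cycleGraph 4) (_root_.starGraph m □ T) B)
    (hroot : ∀ j j' t t', (none, t) ∈ B j → (none, t') ∈ B j' → t = t') : False := by
  by_cases h : ∃ c τ, (none, τ) ∈ B c
  · obtain ⟨c, τ, hc⟩ := h
    refine not_isMinorModel_cycleGraph_four_of_root_mem_zero hT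
      (hB.comp _ (cycleGraph.addRight_injective 2 c)) (τ := τ) fun j t ht => ?_
    obtain rfl := hroot _ c t τ ht hc
    refine ⟨?_, rfl⟩
    by_contra hj
    exact Set.disjoint_left.1 (hB.pairwise_disjoint (by simpa using hj)) ht hc
  · push Not at h
    obtain ⟨⟨v, -⟩⟩ := (hB.connected 0).nonempty
    exact not_isMinorModel_cycleGraph_four_of_root_mem_zero hT hB (τ := v.2)
      fun j t ht => absurd ht (h j t)

noncomputable def rootCount (s : Set (Option (Fin m) × β)) : ℕ :=
  {t | (none, t) ∈ s}.ncard

theorem two_le_sum_rootCount [Finite β] (hT : T.IsAcyclic) {B : Fin 4 → Set (Option (Fin m) × β)}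
    (hB : IsMinorModel (cycleGraph 4) (_root_.starGraph m □ T) B) :
    2 ≤ ∑ j, rootCount (B j) := by
  by_contra! h
  have hle : (⋃ j, {t | (none, t) ∈ B j}).ncard ≤ 1 :=
    (Set.ncard_iUnion_le_of_fintype _).trans (Nat.le_of_lt_succ h)
  rw [Set.ncard_le_one] at hle
  exact not_isMinorModel_cycleGraph_four_of_root_subsingleton hT hB fun j j' t t' ht ht' =>
    hle t (Set.mem_iUnion.2 ⟨j, ht⟩) t' (Set.mem_iUnion.2 ⟨j', ht'⟩)

theorem sum_rootCount_le {ι : Type*} [Finite β] [Fintype ι] {B : ι → Set (Option (Fin m) × β)}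
    (hB : Pairwise fun x y => Disjoint (B x) (B y)) :
    ∑ x, rootCount (B x) ≤ Nat.card β := by
  have hdisj : Pairwise fun x y => Disjoint {t : β | (none, t) ∈ B x} {t | (none, t) ∈ B y} :=
    fun x y hxy => (hB hxy).preimage (Prod.mk none)
  unfold rootCount
  rw [← finsum_eq_sum_of_fintype,
    ← Set.ncard_iUnion_of_finite (fun _ => Set.toFinite _) hdisj, ← Set.ncard_univ]
  exact Set.ncard_le_ncard (Set.subset_univ _)

end StarBox

theorem Function.Injective.sum_comp_le {ι κ : Type*} [Fintype ι] [Fintype κ] {e : ι → κ}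
    (he : Function.Injective e) (w : κ → ℕ) : ∑ i, w (e i) ≤ ∑ k, w k := by
  classical
  rw [← Finset.sum_image fun _ _ _ _ h => he h]
  exact Finset.sum_le_sum_of_subset (Finset.subset_univ _)

/-- Each point of `Fin (K + 1) × Fin (K + 1)` is a corner of at most four unit squares. -/
theorem mul_sq_le_four_mul_sum_of_le_unit_square {K c : ℕ} (w : Fin (K + 1) × Fin (K + 1) → ℕ)
    (hw : ∀ i j : Fin K, c ≤ w (i.castSucc, j.castSucc) + w (i.succ, j.castSucc) +
      w (i.succ, j.succ) + w (i.castSucc, j.succ)) :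
    c * K ^ 2 ≤ 4 * ∑ x, w x := by
  have hcorner : ∀ a b : Fin K → Fin (K + 1), Function.Injective a → Function.Injective b →
      ∑ p : Fin K × Fin K, w (a p.1, b p.2) ≤ ∑ x, w x := fun a b ha hb =>
    (ha.prodMap hb).sum_comp_le w
  calc c * K ^ 2 = ∑ _p : Fin K × Fin K, c := by simp [sq, mul_comm]
    _ ≤ ∑ p : Fin K × Fin K, (w (p.1.castSucc, p.2.castSucc) + w (p.1.succ, p.2.castSucc) +
          w (p.1.succ, p.2.succ) + w (p.1.castSucc, p.2.succ)) :=
        Finset.sum_le_sum fun p _ => hw p.1 p.2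
    _ ≤ 4 * ∑ x, w x := by
        simp only [Finset.sum_add_distrib]
        have := hcorner _ _ (Fin.castSucc_injective K) (Fin.castSucc_injective K)
        have := hcorner _ _ (Fin.succ_injective K) (Fin.castSucc_injective K)
        have := hcorner _ _ (Fin.succ_injective K) (Fin.succ_injective K)
        have := hcorner _ _ (Fin.castSucc_injective K) (Fin.succ_injective K)
        omega

def gridSquare {K : ℕ} (i j : Fin K) : cycleGraph 4 →g gridGraph (K + 1) where
  toFun := ![(i.castSucc, j.castSucc), (i.succ, j.castSucc), (i.succ, j.succ),
    (i.castSucc, j.succ)]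
  map_rel' {x y} h := by
    fin_cases x <;> fin_cases y <;>
      first | exact absurd h (by decide) | simp [gridGraph, Fin.ext_iff]

theorem gridSquare_injective {K : ℕ} (i j : Fin K) : Function.Injective (gridSquare i j) := by
  intro x y h
  fin_cases x <;> fin_cases y <;> simp_all [gridSquare, Fin.ext_iff]

theorem sq_le_two_mul_card_of_gridGraph_isMinorOf {β : Type*} [Finite β] {m k : ℕ}
    {T : SimpleGraph β} (hT : T.IsAcyclic) (h : (gridGraph k).IsMinorOf (_root_.starGraph m □ T)) :
    (k - 1) ^ 2 ≤ 2 * Nat.card β := by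
  obtain ⟨B, hB⟩ := isMinorOf_iff_exists_isMinorModel.1 h
  cases k with
  | zero => simp
  | succ K =>
    have hsq : ∀ i j : Fin K, 2 ≤ ∑ l, rootCount (B (gridSquare i j l)) := fun i j =>
      two_le_sum_rootCount hT (hB.comp _ (gridSquare_injective i j))
    have := mul_sq_le_four_mul_sum_of_le_unit_square (c := 2) (fun x => rootCount (B x))
      fun i j => by simpa [Fin.sum_univ_four, gridSquare, add_assoc] using hsq i j
    have := sum_rootCount_le hB.pairwise_disjoint
    simp only [add_tsub_cancel_right]
    omega

/-- For any star `S` and any tree `T` on `n` vertices, `gm(S □ T) ≤ √(2n) + 1`; that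
is, if the `k × k` grid is a minor of `S □ T` then `k ≤ √(2n) + 1`. -/
theorem stmt17 (m n : ℕ) (T : SimpleGraph (Fin n)) (hT : T.IsTree) :
    (gridMinorNum ((_root_.starGraph m).boxProd T) : ℝ) ≤ Real.sqrt (2 * n) + 1 ∧
    ∀ k : ℕ, (gridGraph k).IsMinorOf ((_root_.starGraph m).boxProd T) →
      (k : ℝ) ≤ Real.sqrt (2 * n) + 1 := by
  have hbound : ∀ k, (gridGraph k).IsMinorOf (_root_.starGraph m □ T) → (k - 1) ^ 2 ≤ 2 * n :=
    fun k hk => by simpa using sq_le_two_mul_card_of_gridGraph_isMinorOf hT.isAcyclic hk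
  have hreal : ∀ k, (gridGraph k).IsMinorOf (_root_.starGraph m □ T) →
      (k : ℝ) ≤ Real.sqrt (2 * n) + 1 := by
    intro k hk
    have hsqrt : ((k - 1 : ℕ) : ℝ) ≤ Real.sqrt (2 * n) :=
      Real.le_sqrt_of_sq_le (by exact_mod_cast hbound k hk)
    have hk : (k : ℝ) ≤ ((k - 1 : ℕ) : ℝ) + 1 := by exact_mod_cast (by omega : k ≤ k - 1 + 1)
    linarith
  refine ⟨hreal _ (Nat.sSup_mem (s := {k | (gridGraph k).IsMinorOf _})
    ⟨0, isMinorOf_of_isEmpty _ _⟩ ⟨2 * n + 1, fun k hk => ?_⟩), hreal⟩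
  have := Nat.le_self_pow two_ne_zero (k - 1)
  have := hbound k hk
  omega
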